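/- Let n ≥ 2 be a natural number, let α ≥ 7 be a real number, and let t be a natural number with t ≥ 4·n·log n. If X is a binomial random variable with t trials and success probability 2/n, then Pr[X > α·t/n] ≤ n^(−4). -/

import Mathlib

/-! Chernoff's method: Markov's inequality applied to `exp X` bounds `Pr[X ≥ a]` by
`exp (-a) * E[exp X] = exp (-a) * (1 + (e - 1) p) ^ t ≤ exp ((e - 1) p t - a)`.
For `p = 2/n` and `a = α t / n ≥ 7 t / n` the exponent is at most `-t/n ≤ -4 log n`. -/

open scoped ENNReal NNReal

open Real ProbabilityTheory MeasureTheory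

set_option linter.deprecated false

namespace PMF

variable (p : ℝ≥0) (hp : p ≤ 1) (t : ℕ)

theorem mgf_binomial (s : ℝ) :
    mgf (fun k : Fin (t + 1) ↦ (k : ℝ)) (binomial p hp t).toMeasure s =
      (p * exp s + (1 - p)) ^ t := by
  have hp' : ((1 : ℝ≥0∞) - p).toReal = 1 - p := by
    rw [ENNReal.toReal_sub_of_le (by exact_mod_cast hp) ENNReal.one_ne_top]; simp
  rw [mgf, integral_eq_sum, add_pow, ← Fin.sum_univ_eq_sum_range]
  refine Finset.sum_congr rfl fun k _ ↦ ?_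
  simp only [binomial_apply, Fin.val_last, smul_eq_mul, ENNReal.toReal_mul, ENNReal.toReal_pow,
    ENNReal.coe_toReal, ENNReal.toReal_natCast, hp', mul_pow, ← exp_nat_mul]
  rw [mul_comm s]
  ring

theorem measureReal_binomial_le_exp {s : ℝ} (hs : 0 ≤ s) (a : ℝ) :
    (binomial p hp t).toMeasure.real {k | a ≤ (k : ℝ)} ≤ exp (p * t * (exp s - 1) - s * a) :=
  calc (binomial p hp t).toMeasure.real {k | a ≤ (k : ℝ)}
      ≤ exp (-s * a) * (p * exp s + (1 - p)) ^ t := by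
        rw [← mgf_binomial]; exact measure_ge_le_exp_mul_mgf a hs (.of_finite)
    _ ≤ exp (-s * a) * exp (p * (exp s - 1)) ^ t := by
        gcongr
        · have : (p : ℝ) ≤ 1 := hp
          positivity
        · linarith [add_one_le_exp (p * (exp s - 1))]
    _ = exp (p * t * (exp s - 1) - s * a) := by
        rw [← exp_nat_mul, ← exp_add]; ring_nf

end PMF

theorem exp_one_chernoff_exponent_le {n t α : ℝ} (hn : 0 < n) (ht₀ : 0 ≤ t) (hα : 7 ≤ α)
    (ht : 4 * n * log n ≤ t) :
    2 / n * t * (exp 1 - 1) - α * t / n ≤ -(4 * log n) := by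
  have hlog : 4 * log n ≤ t / n := by rw [le_div_iff₀ hn]; linarith
  have he : exp 1 ≤ 3 := by linarith [exp_one_lt_d9]
  have hu : 0 ≤ t / n := div_nonneg ht₀ hn.le
  calc 2 / n * t * (exp 1 - 1) - α * t / n = t / n * (2 * (exp 1 - 1) - α) := by ring
    _ ≤ t / n * (-1) := by gcongr; linarith
    _ ≤ -(4 * log n) := by linarith

/-- Upper tail: if `X ~ Bin(t, 2/n)` with `n ≥ 2`, `α ≥ 7`, `t ≥ 4·n·log n`, then
`Pr[X > α·t/n] ≤ n⁻⁴`. -/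
theorem binomial_upper_tail (n t : ℕ) (α : ℝ) (hn : 2 ≤ n) (hα : 7 ≤ α)
    (ht : 4 * (n : ℝ) * Real.log n ≤ t) :
    (PMF.binomial (2 / n) (div_le_one_of_le₀ (by exact_mod_cast hn) (by positivity)) t).toMeasure {k : Fin (t + 1) | α * t / n < (k : ℝ)} ≤
      ((n : ℝ≥0∞) ^ 4)⁻¹ := by
  set μ := (PMF.binomial (2 / n) (div_le_one_of_le₀ (by exact_mod_cast hn) (by positivity)) t).toMeasure
  have hn₀ : (0 : ℝ) < n := by positivity
  have hexponent : ((2 / n : ℝ≥0) : ℝ) * t * (exp 1 - 1) - 1 * (α * t / n) ≤ -(4 * log n) := by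
    rw [one_mul]
    push_cast
    exact exp_one_chernoff_exponent_le hn₀ t.cast_nonneg hα ht
  calc μ {k | α * t / n < (k : ℝ)} ≤ μ {k | α * t / n ≤ (k : ℝ)} :=
        measure_mono <| Set.setOf_subset_setOf.2 fun _ ↦ le_of_lt
    _ = ENNReal.ofReal (μ.real {k | α * t / n ≤ (k : ℝ)}) :=
        (ofReal_measureReal (measure_ne_top _ _)).symm
    _ ≤ ENNReal.ofReal (exp (-(4 * log n))) := ENNReal.ofReal_le_ofReal <|
        (PMF.measureReal_binomial_le_exp _ _ t zero_le_one _).trans (exp_le_exp.2 hexponent)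
    _ = ((n : ℝ≥0∞) ^ 4)⁻¹ := by
        rw [exp_neg, ← Nat.cast_ofNat, ← log_pow, exp_log (by positivity),
          ENNReal.ofReal_inv_of_pos (by positivity), ENNReal.ofReal_pow hn₀.le,
          ENNReal.ofReal_natCast]
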